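/- arXiv:2001.10193 — 3 statements merged into one kernel-verified Lean document; each statement's English description precedes it below -/
import Mathlib

section
/- Let u : ℝ^N → ℝ be a C² function and g : ℝ → [0,∞) be a C¹ function. Then at every point x where g(u(x)) ≠ 0, the inequality g(u)|D²u|² + g'(u)·( (1/2)∇u·∇(|∇u|²) − |∇u|²·Δu ) ≥ −((N−1)·g'(u)²·|∇u|⁴)/(4·g(u)) holds, where |D²u|² denotes the sum of squares of all second partial derivatives ∂ᵢⱼu. -/
open scoped BigOperators

/-- First partial derivative of `u` in direction `i`. -/
noncomputable def pderiv1 (N : ℕ) (u : (Fin N → ℝ) → ℝ) (i : Fin N) (x : Fin N → ℝ) : ℝ :=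
  fderiv ℝ u x (Pi.single i 1)

/-- Second partial derivative `∂ᵢⱼ u`. -/
noncomputable def pderiv2 (N : ℕ) (u : (Fin N → ℝ) → ℝ) (i j : Fin N) (x : Fin N → ℝ) : ℝ :=
  fderiv ℝ (pderiv1 N u j) x (Pi.single i 1)

/-!
With `H = D²u(x)`, `p = ∇u(x)`, `s = |p|²`, `a = g(u(x)) > 0` and `b = g'(u(x))`, the left-hand side
is `a |H|² + b (pᵀHp - s tr H)`, since `½ ∂ᵢ|∇u|² = ∑ⱼ ∂ⱼu ∂ᵢⱼu`. Expanding the square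
`0 ≤ |2aH + bK|²` with `K = ppᵀ - sI`, and using `⟨H, K⟩ = pᵀHp - s tr H` and `|K|² = (N-1)s²`,
gives the inequality after division by `4a`.
-/

open Finset

section Algebra

variable {ι : Type*} [Fintype ι] [DecidableEq ι]

lemma sum_sum_mul_outer_sub_id (H : ι → ι → ℝ) (p : ι → ℝ) :
    ∑ i, ∑ j, H i j * (p i * p j - (∑ k, p k ^ 2) * if i = j then 1 else 0)
      = ∑ i, ∑ j, p i * p j * H i j - (∑ k, p k ^ 2) * ∑ i, H i i := by
  simp only [mul_sub, sum_sub_distrib, mul_ite, mul_one, mul_zero, sum_ite_eq, mem_univ,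
    if_true, ← sum_mul]
  rw [mul_comm (∑ k, p k ^ 2)]
  congr 1
  exact sum_congr rfl fun i _ => sum_congr rfl fun j _ => by ring

lemma sum_sum_sq_outer_sub_id (p : ι → ℝ) :
    ∑ i, ∑ j, (p i * p j - (∑ k, p k ^ 2) * if i = j then 1 else 0) ^ 2
      = ((Fintype.card ι : ℝ) - 1) * (∑ k, p k ^ 2) ^ 2 := by
  set s := ∑ k, p k ^ 2
  have hexp : ∀ i j, (p i * p j - s * if i = j then 1 else 0) ^ 2
      = p i ^ 2 * p j ^ 2 + if i = j then s ^ 2 - 2 * s * p i ^ 2 else 0 := by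
    intro i j
    split_ifs with h
    · subst h; ring
    · ring
  simp only [hexp, sum_add_distrib, sum_ite_eq, mem_univ, if_true, ← sum_mul,
    sum_sub_distrib, sum_const, card_univ, nsmul_eq_mul, ← mul_sum]
  ring

lemma sum_sum_sq_add_mul_ge (a b : ℝ) (ha : 0 < a) (H : ι → ι → ℝ) (p : ι → ℝ) :
    a * (∑ i, ∑ j, H i j ^ 2) + b * (∑ i, ∑ j, p i * p j * H i j - (∑ j, p j ^ 2) * ∑ i, H i i)
      ≥ -(((Fintype.card ι : ℝ) - 1) * b ^ 2 * (∑ j, p j ^ 2) ^ 2) / (4 * a) := by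
  set K : ι → ι → ℝ := fun i j => p i * p j - (∑ k, p k ^ 2) * if i = j then 1 else 0
  have hsq : 0 ≤ ∑ i, ∑ j, (2 * a * H i j + b * K i j) ^ 2 := by positivity
  have hexpand : ∑ i, ∑ j, (2 * a * H i j + b * K i j) ^ 2
      = 4 * a ^ 2 * ∑ i, ∑ j, H i j ^ 2 + 4 * a * b * ∑ i, ∑ j, H i j * K i j
        + b ^ 2 * ∑ i, ∑ j, K i j ^ 2 := by
    simp only [mul_sum, ← sum_add_distrib]
    exact sum_congr rfl fun i _ => sum_congr rfl fun j _ => by ring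
  rw [hexpand, sum_sum_mul_outer_sub_id, sum_sum_sq_outer_sub_id] at hsq
  rw [ge_iff_le, neg_div, neg_le, le_div_iff₀ (by positivity)]
  nlinarith

end Algebra

lemma fderiv_sum_sq_apply {E ι : Type*} [NormedAddCommGroup E] [NormedSpace ℝ E] [Fintype ι]
    {f : ι → E → ℝ} {x : E} (hf : ∀ j, DifferentiableAt ℝ (f j) x) (v : E) :
    fderiv ℝ (fun y => ∑ j, f j y ^ 2) x v = ∑ j, 2 * f j x * fderiv ℝ (f j) x v := by
  have hsq : ∀ j, HasFDerivAt (fun y => f j y ^ 2)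
      ((2 * f j x) • fderiv ℝ (f j) x) x := fun j => by
    simpa using (hf j).hasFDerivAt.pow 2
  rw [(HasFDerivAt.fun_sum fun j _ => hsq j).fderiv]
  simp only [_root_.sum_apply, smul_apply, smul_eq_mul]

lemma ContDiff.differentiable_pderiv1 {N : ℕ} {u : (Fin N → ℝ) → ℝ} (hu : ContDiff ℝ 2 u)
    (j : Fin N) : Differentiable ℝ (pderiv1 N u j) :=
  ((hu.fderiv_right (m := 1) le_rfl).clm_apply contDiff_const).differentiable one_ne_zero

lemma pderiv1_sum_pderiv1_sq {N : ℕ} {u : (Fin N → ℝ) → ℝ} (hu : ContDiff ℝ 2 u)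
    (x : Fin N → ℝ) (i : Fin N) :
    pderiv1 N (fun y => ∑ j, pderiv1 N u j y ^ 2) i x
      = ∑ j, 2 * pderiv1 N u j x * pderiv2 N u i j x :=
  fderiv_sum_sq_apply (fun j => hu.differentiable_pderiv1 j x) _

theorem stmt0_general (N : ℕ) (u : (Fin N → ℝ) → ℝ) (hu : ContDiff ℝ 2 u)
    (g : ℝ → ℝ) (hg0 : ∀ s, 0 ≤ g s)
    (x : Fin N → ℝ) (hgx : g (u x) ≠ 0) :
    g (u x) * (∑ i, ∑ j, (pderiv2 N u i j x) ^ 2) +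
      deriv g (u x) *
        ((1 / 2) * (∑ i, pderiv1 N u i x *
            pderiv1 N (fun y => ∑ j, (pderiv1 N u j y) ^ 2) i x)
          - (∑ j, (pderiv1 N u j x) ^ 2) * (∑ i, pderiv2 N u i i x)) ≥
      -(((N : ℝ) - 1) * (deriv g (u x)) ^ 2 * (∑ j, (pderiv1 N u j x) ^ 2) ^ 2) /
        (4 * g (u x)) := by
  have hpos : 0 < g (u x) := (hg0 (u x)).lt_of_ne' hgx
  have hhalf : (1 / 2 : ℝ) * ∑ i, pderiv1 N u i x *
        pderiv1 N (fun y => ∑ j, pderiv1 N u j y ^ 2) i x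
      = ∑ i, ∑ j, pderiv1 N u i x * pderiv1 N u j x * pderiv2 N u i j x := by
    simp only [pderiv1_sum_pderiv1_sq hu, mul_sum]
    exact sum_congr rfl fun i _ => sum_congr rfl fun j _ => by ring
  rw [hhalf]
  simpa only [Fintype.card_fin] using sum_sum_sq_add_mul_ge _ (deriv g (u x)) hpos
    (fun i j => pderiv2 N u i j x) (fun i => pderiv1 N u i x)

/-- Bénilan-type inequality: for `u ∈ C²(ℝᴺ,ℝ)` and `g ∈ C¹(ℝ,[0,∞))`, at every point where
`g(u(x)) ≠ 0`,
`g(u)|D²u|² + g'(u)((1/2)∇u·∇(|∇u|²) − |∇u|²Δu) ≥ −((N−1) g'(u)² |∇u|⁴)/(4 g(u))`. -/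
theorem stmt0 (N : ℕ) (hN : 1 ≤ N) (u : (Fin N → ℝ) → ℝ) (hu : ContDiff ℝ 2 u)
    (g : ℝ → ℝ) (hg : ContDiff ℝ 1 g) (hg0 : ∀ s, 0 ≤ g s)
    (x : Fin N → ℝ) (hgx : g (u x) ≠ 0) :
    g (u x) * (∑ i, ∑ j, (pderiv2 N u i j x) ^ 2) +
      deriv g (u x) *
        ((1 / 2) * (∑ i, pderiv1 N u i x *
            pderiv1 N (fun y => ∑ j, (pderiv1 N u j y) ^ 2) i x)
          - (∑ j, (pderiv1 N u j x) ^ 2) * (∑ i, pderiv2 N u i i x)) ≥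
      -(((N : ℝ) - 1) * (deriv g (u x)) ^ 2 * (∑ j, (pderiv1 N u j x) ^ 2) ^ 2) /
        (4 * g (u x)) :=
  stmt0_general N u hu g hg0 x hgx
end

section
/- Let m > 0, β ∈ (0, m), λ > 0 and set K = (λ(m+β)²/(2m(N(m+β)−2β)))^(m/(m+β)). If N ≥ 1 and N(m+β) − 2β > 0, then K > 0 and the function u(x) = K^(1/m)·|x − x₀|^(2/(m+β)) satisfies −Δ(u^m) + λ·u^(−β) = 0 at every x ≠ x₀. -/
open scoped BigOperators

/-- The Laplacian of `f : ℝᴺ → ℝ` as the sum of second partial derivatives along the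
standard coordinate directions. -/
noncomputable def lap (N : ℕ) (f : EuclideanSpace ℝ (Fin N) → ℝ)
    (x : EuclideanSpace ℝ (Fin N)) : ℝ :=
  ∑ i, fderiv ℝ (fun y => fderiv ℝ f y (EuclideanSpace.single i 1)) x (EuclideanSpace.single i 1)

/-!
Writing `r = ‖x - x₀‖` and `q = 2m/(m+β)`, the profile gives `u^m = K r^q` and
`u^(-β) = K^(-β/m) r^(q-2)`. Away from `x₀` the Laplacian of a radial power is again a radial
power, `Δ r^q = q (q + N - 2) r^(q-2)`, so both terms of the equation carry the same factor
`r^(q-2)` and the equation collapses to `λ = K^((m+β)/m) q (q + N - 2)`, which is how `K` is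
chosen, since `q (q + N - 2) = 2m(N(m+β) - 2β)/(m+β)²`.
-/

open scoped RealInnerProductSpace Topology

section RadialPower

variable {E : Type*} [NormedAddCommGroup E] [InnerProductSpace ℝ E] {c x : E}

theorem hasFDerivAt_norm_sub_rpow (p : ℝ) (hx : x ≠ c) :
    HasFDerivAt (fun y => ‖y - c‖ ^ p) ((p * ‖x - c‖ ^ (p - 2)) • innerSL ℝ (x - c)) x := by
  have hsq (y : E) (s : ℝ) : (‖y - c‖ ^ 2) ^ s = ‖y - c‖ ^ (2 * s) := by
    rw [← Real.rpow_natCast, ← Real.rpow_mul (norm_nonneg _), Nat.cast_ofNat]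
  have h := ((hasFDerivAt_id x).sub_const c).norm_sq.rpow_const (p := p / 2)
    (Or.inl (pow_ne_zero 2 (norm_ne_zero_iff.2 (sub_ne_zero.2 hx))))
  simp only [id, hsq, mul_div_cancel₀ p two_ne_zero] at h
  convert h using 1
  ext v
  simp only [smul_apply, ContinuousLinearMap.comp_apply, innerSL_apply_apply,
    ContinuousLinearMap.id_apply, smul_eq_mul, nsmul_eq_mul]
  ring_nf

theorem fderiv_norm_sub_rpow_apply (p : ℝ) (hx : x ≠ c) (v : E) :
    fderiv ℝ (fun y => ‖y - c‖ ^ p) x v = p * ‖x - c‖ ^ (p - 2) * ⟪x - c, v⟫ := by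
  rw [(hasFDerivAt_norm_sub_rpow p hx).fderiv]
  simp only [smul_apply, innerSL_apply_apply, smul_eq_mul]

theorem fderiv_fderiv_norm_sub_rpow_apply (p : ℝ) (hx : x ≠ c) (v : E) :
    fderiv ℝ (fun y => fderiv ℝ (fun z => ‖z - c‖ ^ p) y v) x v
      = p * ((p - 2) * ‖x - c‖ ^ (p - 4) * ⟪x - c, v⟫ ^ 2 + ‖x - c‖ ^ (p - 2) * ‖v‖ ^ 2) := by
  have hfirst : (fun y => fderiv ℝ (fun z => ‖z - c‖ ^ p) y v)
      =ᶠ[𝓝 x] fun y => p * ‖y - c‖ ^ (p - 2) * ⟪y - c, v⟫ := by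
    filter_upwards [isOpen_ne.mem_nhds hx] with y hy
    exact fderiv_norm_sub_rpow_apply p hy v
  have hinner : HasFDerivAt (fun y => ⟪y - c, v⟫) (innerSL ℝ v) x := by
    simp_rw [real_inner_comm v]
    exact (innerSL ℝ v).hasFDerivAt.comp x ((hasFDerivAt_id x).sub_const c)
  rw [hfirst.fderiv_eq,
    (((hasFDerivAt_norm_sub_rpow (p - 2) hx).const_mul p).fun_mul hinner).fderiv]
  simp only [add_apply, smul_apply, innerSL_apply_apply, smul_eq_mul,
    real_inner_self_eq_norm_sq, real_inner_comm v]
  ring_nf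

end RadialPower

theorem lap_const_mul {N : ℕ} (a : ℝ) (f : EuclideanSpace ℝ (Fin N) → ℝ)
    (x : EuclideanSpace ℝ (Fin N)) : lap N (fun y => a * f y) x = a * lap N f x := by
  have hmul (g : EuclideanSpace ℝ (Fin N) → ℝ) : fderiv ℝ (fun y => a * g y) = a • fderiv ℝ g :=
    fderiv_const_smul_field a
  simp only [lap, Finset.mul_sum, Pi.smul_apply, smul_apply, smul_eq_mul, hmul]

theorem lap_norm_sub_rpow {N : ℕ} (p : ℝ) {c x : EuclideanSpace ℝ (Fin N)} (hx : x ≠ c) :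
    lap N (fun y => ‖y - c‖ ^ p) x = p * (p + N - 2) * ‖x - c‖ ^ (p - 2) := by
  have hr : 0 < ‖x - c‖ := norm_pos_iff.2 (sub_ne_zero.2 hx)
  have hpow : ‖x - c‖ ^ (p - 4) * ‖x - c‖ ^ 2 = ‖x - c‖ ^ (p - 2) := by
    rw [← Real.rpow_natCast, ← Real.rpow_add hr]; ring_nf
  have hb := (EuclideanSpace.basisFun (Fin N) ℝ).orthonormal
  simp only [lap, ← EuclideanSpace.basisFun_apply, fderiv_fderiv_norm_sub_rpow_apply p hx]
  rw [← Finset.mul_sum, Finset.sum_add_distrib, ← Finset.mul_sum, ← Finset.mul_sum,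
    OrthonormalBasis.sum_sq_inner_left]
  simp only [hb.1, one_pow, Finset.sum_const, Finset.card_univ, Fintype.card_fin, nsmul_eq_mul]
  linear_combination p * (p - 2) * hpow

theorem stmt5_general (N : ℕ) (m β lam : ℝ) (hm : 0 < m) (hβ0 : 0 < β)
    (hlam : 0 < lam) (hpos : 0 < (N : ℝ) * (m + β) - 2 * β)
    (x₀ : EuclideanSpace ℝ (Fin N)) (K : ℝ)
    (hK : K = (lam * (m + β) ^ 2 / (2 * m * ((N : ℝ) * (m + β) - 2 * β))) ^ (m / (m + β))) :
    0 < K ∧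
    ∀ x : EuclideanSpace ℝ (Fin N), x ≠ x₀ →
      -lap N (fun y => (K ^ (1 / m) * ‖y - x₀‖ ^ (2 / (m + β))) ^ m) x
          + lam * (K ^ (1 / m) * ‖x - x₀‖ ^ (2 / (m + β))) ^ (-β) = 0 := by
  have hmβ : 0 < m + β := by linarith
  set B := lam * (m + β) ^ 2 / (2 * m * ((N : ℝ) * (m + β) - 2 * β)) with hB_def
  have hB : 0 < B := by positivity
  have hK0 : 0 < K := hK ▸ Real.rpow_pos_of_pos hB _
  refine ⟨hK0, fun x hx => ?_⟩
  have hu (y : EuclideanSpace ℝ (Fin N)) (s : ℝ) :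
      (K ^ (1 / m) * ‖y - x₀‖ ^ (2 / (m + β))) ^ s
        = K ^ (1 / m * s) * ‖y - x₀‖ ^ (2 / (m + β) * s) := by
    rw [Real.mul_rpow (by positivity) (by positivity), ← Real.rpow_mul hK0.le,
      ← Real.rpow_mul (norm_nonneg _)]
  have hKB : K ^ (1 / m * -β) = K / B := by
    have hKpow : K ^ ((m + β) / m) = B := by
      rw [hK, ← Real.rpow_mul hB.le, div_mul_div_cancel₀ hmβ.ne', div_self hm.ne',
        Real.rpow_one]
    rw [show 1 / m * -β = 1 - (m + β) / m by field_simp; ring, Real.rpow_sub hK0, Real.rpow_one,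
      hKpow]
  have hexp : 2 / (m + β) * m - 2 = 2 / (m + β) * -β := by field_simp; ring
  have hcoef : lam * (K / B) = K * (2 / (m + β) * m * (2 / (m + β) * m + N - 2)) := by
    rw [hB_def]; field_simp; ring
  simp only [hu, one_div_mul_cancel hm.ne', Real.rpow_one]
  rw [lap_const_mul, lap_norm_sub_rpow _ hx, hexp, hKB]
  linear_combination ‖x - x₀‖ ^ (2 / (m + β) * -β) * hcoef

/-- With `K = (λ(m+β)²/(2m(N(m+β)−2β)))^{m/(m+β)}`, if `N ≥ 1` and `N(m+β) − 2β > 0`, then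
`K > 0` and `u(x) = K^{1/m}|x−x₀|^{2/(m+β)}` satisfies `−Δ(u^m) + λ u^{−β} = 0` for `x ≠ x₀`. -/
theorem stmt5 (N : ℕ) (hN : 1 ≤ N) (m β lam : ℝ) (hm : 0 < m) (hβ0 : 0 < β) (hβm : β < m)
    (hlam : 0 < lam) (hpos : 0 < (N : ℝ) * (m + β) - 2 * β)
    (x₀ : EuclideanSpace ℝ (Fin N)) (K : ℝ)
    (hK : K = (lam * (m + β) ^ 2 / (2 * m * ((N : ℝ) * (m + β) - 2 * β))) ^ (m / (m + β))) :
    0 < K ∧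
    ∀ x : EuclideanSpace ℝ (Fin N), x ≠ x₀ →
      -lap N (fun y => (K ^ (1 / m) * ‖y - x₀‖ ^ (2 / (m + β))) ^ m) x
          + lam * (K ^ (1 / m) * ‖x - x₀‖ ^ (2 / (m + β))) ^ (-β) = 0 :=
  stmt5_general N m β lam hm hβ0 hlam hpos x₀ K hK
end

section
/- Let m ≥ 2 + β with β > 0, and p as above with N₀ > 0. Then for all y ∈ [0,1]: −m·( (m/(m−1))·p''(y) + p(y)·(p''/p')'(y) ) ≥ 2m²N₀/(3(m−1)) + (m/4)·p(y) ≥ 2m²N₀/(3(m−1)). -/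
/-!
Since `p'' ≡ -2N₀/3` and `p''/p' = 1/(y - 2)`, the left-hand side equals
`2m²N₀/(3(m-1)) + m p(y)/(y - 2)²`, and `(y - 2)² ≤ 4` on `[0, 1]`.
-/

/-- The auxiliary function `p(y) = N₀ y (4 − y)/3`. -/
noncomputable def pfun (N₀ : ℝ) : ℝ → ℝ := fun y => N₀ * y * (4 - y) / 3

section pfun

variable {N₀ : ℝ}

lemma pfun_nonneg (hN₀ : 0 ≤ N₀) {y : ℝ} (hy₀ : 0 ≤ y) (hy₄ : y ≤ 4) : 0 ≤ pfun N₀ y :=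
  div_nonneg (mul_nonneg (mul_nonneg hN₀ hy₀) (sub_nonneg.2 hy₄)) zero_le_three

lemma hasDerivAt_pfun (N₀ y : ℝ) : HasDerivAt (pfun N₀) (N₀ * (4 - 2 * y) / 3) y :=
  (((hasDerivAt_id' y).const_mul N₀).mul ((hasDerivAt_id' y).const_sub 4)).div_const 3
    |>.congr_deriv (by ring)

lemma deriv_pfun (N₀ : ℝ) : deriv (pfun N₀) = fun y => N₀ * (4 - 2 * y) / 3 :=
  funext fun y => (hasDerivAt_pfun N₀ y).deriv

lemma deriv_deriv_pfun (N₀ : ℝ) : deriv (deriv (pfun N₀)) = fun _ => -2 * N₀ / 3 := by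
  rw [deriv_pfun]
  exact funext fun y => ((((hasDerivAt_id' y).const_mul 2).const_sub 4).const_mul N₀).div_const 3
    |>.congr_deriv (by ring) |>.deriv

/-- At `z = 2` both sides are `0`, by the conventions `x / 0 = 0` and `0⁻¹ = 0`. -/
lemma deriv_deriv_pfun_div_deriv_pfun (hN₀ : N₀ ≠ 0) :
    (fun z => deriv (deriv (pfun N₀)) z / deriv (pfun N₀) z) = fun z => (z - 2)⁻¹ := by
  funext z
  rw [deriv_deriv_pfun, deriv_pfun]
  rcases eq_or_ne z 2 with rfl | hz
  · norm_num
  · have : 4 - 2 * z ≠ 0 := by contrapose! hz; linarith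
    have : z - 2 ≠ 0 := sub_ne_zero.2 hz
    field_simp
    ring

lemma deriv_ratio_pfun (hN₀ : N₀ ≠ 0) {y : ℝ} (hy : y ≠ 2) :
    deriv (fun z => deriv (deriv (pfun N₀)) z / deriv (pfun N₀) z) y = -((y - 2) ^ 2)⁻¹ := by
  rw [deriv_deriv_pfun_div_deriv_pfun hN₀]
  exact ((hasDerivAt_id' y).sub_const 2).inv (sub_ne_zero.2 hy) |>.congr_deriv (by ring) |>.deriv

end pfun

/-- For `m ≥ 2 + β`, `β > 0` and `N₀ > 0`, for all `y ∈ [0,1]`: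
`−m((m/(m−1))p'' + p(y)(p''/p')'(y)) ≥ 2m²N₀/(3(m−1)) + (m/4)p(y) ≥ 2m²N₀/(3(m−1))`. -/
theorem stmt17 (m β N₀ : ℝ) (hβ : 0 < β) (hm : 2 + β ≤ m) (hN₀ : 0 < N₀) :
    ∀ y ∈ Set.Icc (0 : ℝ) 1,
      2 * m ^ 2 * N₀ / (3 * (m - 1)) ≤
        2 * m ^ 2 * N₀ / (3 * (m - 1)) + (m / 4) * pfun N₀ y ∧
      2 * m ^ 2 * N₀ / (3 * (m - 1)) + (m / 4) * pfun N₀ y ≤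
        -(m * ((m / (m - 1)) * deriv (deriv (pfun N₀)) y +
            pfun N₀ y * deriv (fun z => deriv (deriv (pfun N₀)) z / deriv (pfun N₀) z) y)) := by
  rintro y ⟨hy₀, hy₁⟩
  have hm₀ : 0 < m := by linarith
  have hm₁ : 0 < m - 1 := by linarith
  have hp : 0 ≤ pfun N₀ y := pfun_nonneg hN₀.le hy₀ (by linarith)
  have hy₂ : y ≠ 2 := (by linarith : y < 2).ne
  rw [deriv_ratio_pfun hN₀.ne' hy₂, deriv_deriv_pfun]
  refine ⟨le_add_of_nonneg_right (by positivity), ?_⟩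
  calc 2 * m ^ 2 * N₀ / (3 * (m - 1)) + (m / 4) * pfun N₀ y
      ≤ 2 * m ^ 2 * N₀ / (3 * (m - 1)) + m * pfun N₀ y / (y - 2) ^ 2 := by
        rw [div_mul_eq_mul_div]
        gcongr
        nlinarith
    _ = _ := by
        field_simp
        ring
end
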